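/- Let x, y, z ∈ (0,∞)^n and s ∈ [-1,1]^n. If |x − y| > 2|x − z| (Euclidean norm), then (1/4)·q(x, y, s) ≤ q(z, y, s) ≤ 4·q(x, y, s), where q(x,y,s) = |x|² + |y|² + 2·Σ_{j=1}^n x_j y_j s_j. -/

import Mathlib

/-!
Completing the square coordinatewise,
`q(x, y, s) = |x + y ⊙ s|² + Σ_j y_j² (1 - s_j²)`, with a nonnegative second summand that does
not depend on `x`. Hence `x ↦ √q(x, y, s)` is `1`-Lipschitz, being the composition of
`x ↦ |x + y ⊙ s|` with `t ↦ √(t² + c)`. For positive `x, y` and `s_j ≥ -1` we also have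
`q(x, y, s) ≥ |x - y|²`, so
`|√q(z, y, s) - √q(x, y, s)| ≤ |x - z| < |x - y| / 2 ≤ √q(x, y, s) / 2`,
which pins `√q(z, y, s)` between one half and three halves of `√q(x, y, s)`.
-/

open scoped BigOperators

/-- `q(x,y,s) = |x|² + |y|² + 2 Σ x_j y_j s_j`. -/
noncomputable def qform {n : ℕ} (x y : EuclideanSpace ℝ (Fin n)) (s : Fin n → ℝ) : ℝ :=
  ‖x‖ ^ 2 + ‖y‖ ^ 2 + 2 * ∑ j, x j * y j * s j

variable {n : ℕ}

noncomputable def qformShift (y : EuclideanSpace ℝ (Fin n)) (s : Fin n → ℝ) :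
    EuclideanSpace ℝ (Fin n) :=
  WithLp.toLp 2 fun j => y j * s j

noncomputable def qformDefect (y : EuclideanSpace ℝ (Fin n)) (s : Fin n → ℝ) : ℝ :=
  ∑ j, y j ^ 2 * (1 - s j ^ 2)

lemma qform_eq_norm_add_qformShift_sq_add_qformDefect (x y : EuclideanSpace ℝ (Fin n))
    (s : Fin n → ℝ) : qform x y s = ‖x + qformShift y s‖ ^ 2 + qformDefect y s := by
  simp only [qform, qformShift, qformDefect, EuclideanSpace.norm_sq_eq, Real.norm_eq_abs, sq_abs,
    PiLp.add_apply, Finset.mul_sum, ← Finset.sum_add_distrib]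
  exact Finset.sum_congr rfl fun j _ => by ring

lemma qformDefect_nonneg (y : EuclideanSpace ℝ (Fin n)) {s : Fin n → ℝ}
    (hs : ∀ j, s j ∈ Set.Icc (-1 : ℝ) 1) : 0 ≤ qformDefect y s :=
  Finset.sum_nonneg fun j _ => by
    obtain ⟨h₁, h₂⟩ := hs j
    exact mul_nonneg (sq_nonneg _) (by nlinarith)

lemma qform_nonneg (x y : EuclideanSpace ℝ (Fin n)) {s : Fin n → ℝ}
    (hs : ∀ j, s j ∈ Set.Icc (-1 : ℝ) 1) : 0 ≤ qform x y s := by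
  rw [qform_eq_norm_add_qformShift_sq_add_qformDefect]
  exact add_nonneg (sq_nonneg _) (qformDefect_nonneg y hs)

lemma norm_sub_sq_le_qform {x y : EuclideanSpace ℝ (Fin n)} {s : Fin n → ℝ}
    (hxy : ∀ j, 0 ≤ x j * y j) (hs : ∀ j, -1 ≤ s j) : ‖x - y‖ ^ 2 ≤ qform x y s := by
  simp only [qform, EuclideanSpace.norm_sq_eq, Real.norm_eq_abs, sq_abs, PiLp.sub_apply,
    Finset.mul_sum, ← Finset.sum_add_distrib]
  exact Finset.sum_le_sum fun j _ => by nlinarith [hxy j, hs j]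

lemma lipschitzWith_sqrt_sq_add {c : ℝ} (hc : 0 ≤ c) :
    LipschitzWith 1 fun t : ℝ => √(t ^ 2 + c) := by
  refine LipschitzWith.of_le_add fun s t => Real.sqrt_le_iff.mpr ⟨by positivity, ?_⟩
  have ht : |t| ≤ √(t ^ 2 + c) := Real.abs_le_sqrt (by linarith)
  have hst : (s - t) * t ≤ |s - t| * |t| := by rw [← abs_mul]; exact le_abs_self _
  rw [Real.dist_eq]
  nlinarith [Real.sq_sqrt (by positivity : 0 ≤ t ^ 2 + c), sq_abs (s - t),
    mul_le_mul_of_nonneg_left ht (abs_nonneg (s - t))]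

lemma lipschitzWith_sqrt_qform (y : EuclideanSpace ℝ (Fin n)) {s : Fin n → ℝ}
    (hs : ∀ j, s j ∈ Set.Icc (-1 : ℝ) 1) :
    LipschitzWith 1 fun x => √(qform x y s) := by
  have h := (lipschitzWith_sqrt_sq_add (qformDefect_nonneg y hs)).comp
    (lipschitzWith_one_norm.comp (isometry_add_right (qformShift y s)).lipschitz)
  simp only [mul_one] at h
  convert h using 2 with x
  simp [qform_eq_norm_add_qformShift_sq_add_qformDefect]

lemma sq_bounds_of_abs_sub_le_half {a b : ℝ} (hb : 0 ≤ b) (h : |b - a| ≤ a / 2) :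
    a ^ 2 / 4 ≤ b ^ 2 ∧ b ^ 2 ≤ 4 * a ^ 2 := by
  obtain ⟨h₁, h₂⟩ := abs_le.mp h
  constructor <;> nlinarith

theorem stmt1_general {n : ℕ} (x y z : EuclideanSpace ℝ (Fin n)) (s : Fin n → ℝ)
    (hx : ∀ j, 0 < x j) (hy : ∀ j, 0 < y j)
    (hs : ∀ j, s j ∈ Set.Icc (-1 : ℝ) 1)
    (h : ‖x - y‖ > 2 * ‖x - z‖) :
    (1 / 4) * qform x y s ≤ qform z y s ∧ qform z y s ≤ 4 * qform x y s := by
  set a := √(qform x y s)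
  set b := √(qform z y s)
  have hxy : ‖x - y‖ ≤ a :=
    Real.le_sqrt_of_sq_le (norm_sub_sq_le_qform (fun j => (mul_pos (hx j) (hy j)).le)
      fun j => (hs j).1)
  have hba : |b - a| ≤ a / 2 :=
    calc |b - a| = dist b a := (Real.dist_eq b a).symm
      _ ≤ dist z x := by simpa using (lipschitzWith_sqrt_qform y hs).dist_le_mul z x
      _ ≤ a / 2 := by rw [dist_eq_norm, norm_sub_rev]; linarith
  obtain ⟨h₁, h₂⟩ := sq_bounds_of_abs_sub_le_half (Real.sqrt_nonneg _) hba
  rw [Real.sq_sqrt (qform_nonneg x y hs), Real.sq_sqrt (qform_nonneg z y hs)] at h₁ h₂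
  exact ⟨by linarith, h₂⟩

theorem stmt1 {n : ℕ} (x y z : EuclideanSpace ℝ (Fin n)) (s : Fin n → ℝ)
    (hx : ∀ j, 0 < x j) (hy : ∀ j, 0 < y j) (hz : ∀ j, 0 < z j)
    (hs : ∀ j, s j ∈ Set.Icc (-1 : ℝ) 1)
    (h : ‖x - y‖ > 2 * ‖x - z‖) :
    (1 / 4) * qform x y s ≤ qform z y s ∧ qform z y s ≤ 4 * qform x y s :=
  stmt1_general x y z s hx hy hs h
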